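/- Under the setup of the worst-case dataset (σ > ζ > 0, c > 0 with σ·tanh(σc) + ζ·tanh(ζc) = σ - ζ, A_k, b_k, f_k as defined), the optimal value satisfies f_k* = f_k(x*) = 8k·log 2 + 4k·[log(cosh(σc)) + log(cosh(ζc)) - (σ - ζ)·c], where x* = c·(1,...,k)ᵀ. -/

import Mathlib

noncomputable section

/-- The k×k matrix `W_k` with 1's on the main anti-diagonal (1-based entries `i+j = k+1`)
and -1's on the adjacent anti-diagonal (`i+j = k`). -/
def Wmat (k : ℕ) : Matrix (Fin k) (Fin k) ℝ :=
  Matrix.of fun i j =>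
    if (i : ℕ) + (j : ℕ) + 2 = k + 1 then 1
    else if (i : ℕ) + (j : ℕ) + 2 = k then -1
    else 0

/-- The 4k×k data matrix with vertical blocks `2σW_k, -2ζW_k, -2σW_k, 2ζW_k`. -/
def Amat (σ ζ : ℝ) (k : ℕ) : Matrix (Fin (4 * k)) (Fin k) ℝ :=
  Matrix.of fun i j =>
    if h1 : (i : ℕ) < k then 2 * σ * Wmat k ⟨i, h1⟩ j
    else if h2 : (i : ℕ) < 2 * k then -2 * ζ * Wmat k ⟨(i : ℕ) - k, by omega⟩ j
    else if h3 : (i : ℕ) < 3 * k then -2 * σ * Wmat k ⟨(i : ℕ) - 2 * k, by omega⟩ j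
    else 2 * ζ * Wmat k ⟨(i : ℕ) - 3 * k, by have := i.isLt; omega⟩ j

/-- The response vector `b_k = (𝟙_k, 𝟙_k, -𝟙_k, -𝟙_k)`. -/
def bvec (k : ℕ) : Fin (4 * k) → ℝ := fun i => if (i : ℕ) < 2 * k then 1 else -1

/-- The binary logistic regression loss `f_k(x) = h(A_k x) - b_kᵀ A_k x` with
`h(u) = Σᵢ 2 log(2 cosh(uᵢ/2))`. -/
def fk (σ ζ : ℝ) (k : ℕ) (x : Fin k → ℝ) : ℝ :=
  (∑ i, 2 * Real.log (2 * Real.cosh ((Amat σ ζ k).mulVec x i / 2)))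
    - ∑ i, bvec k i * (Amat σ ζ k).mulVec x i

/-- `x* = c·(1, 2, …, k)ᵀ`. -/
def xstar (c : ℝ) (k : ℕ) : Fin k → ℝ := fun i => c * ((i : ℕ) + 1)

/-- `K_{t,k} = span{e_{k-t+1}, …, e_k}` (1-based indexing). -/
def Kspan (k t : ℕ) : Submodule ℝ (Fin k → ℝ) :=
  Submodule.span ℝ ((fun i : Fin k => Pi.single i (1 : ℝ)) '' {i : Fin k | k - t ≤ (i : ℕ)})

end

/-!
`f_k` is a sum of the convex functions `u ↦ 2 log (2 cosh (u / 2)) - b u` evaluated at the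
coordinates of `A_k x`, so it lies above its tangent plane at `x*`, whose slope is
`A_kᵀ (tanh (A_k x* / 2) - b_k)`. Since `W_k x* = c 𝟙`, the vector `A_k x*` is constant on each
of the four blocks of rows, and the defining equation of `c` makes this gradient vanish. The value
`f_k(x*)` is then a sum of `4k` explicit terms.
-/

open Real Matrix Finset

namespace Real

theorem exp_tanh_mul_le (x d : ℝ) : exp (tanh x * d) ≤ cosh d + tanh x * sinh d := by
  have h₁ : 0 ≤ (1 + tanh x) / 2 := by linarith [neg_one_lt_tanh x]
  have h₂ : 0 ≤ (1 - tanh x) / 2 := by linarith [tanh_lt_one x]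
  have h := convexOn_exp.2 (Set.mem_univ d) (Set.mem_univ (-d)) h₁ h₂ (by ring)
  simp only [smul_eq_mul] at h
  calc exp (tanh x * d) = exp ((1 + tanh x) / 2 * d + (1 - tanh x) / 2 * -d) := by ring_nf
    _ ≤ (1 + tanh x) / 2 * exp d + (1 - tanh x) / 2 * exp (-d) := h
    _ = cosh d + tanh x * sinh d := by rw [cosh_eq, sinh_eq]; ring

theorem log_cosh_add_tanh_mul_sub_le (x y : ℝ) :
    log (cosh x) + tanh x * (y - x) ≤ log (cosh y) := by
  have hx := cosh_pos x
  have hy : cosh y = cosh x * (cosh (y - x) + tanh x * sinh (y - x)) := by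
    rw [tanh_eq_sinh_div_cosh]
    field_simp
    rw [← cosh_add, add_sub_cancel]
  have h := exp_tanh_mul_le x (y - x)
  rw [hy, log_mul hx.ne' ((exp_pos _).trans_le h).ne', add_le_add_iff_left,
    le_log_iff_exp_le ((exp_pos _).trans_le h)]
  exact h

end Real

theorem logistic_tangent_le (b u v : ℝ) :
    2 * log (2 * cosh (u / 2)) - b * u + (tanh (u / 2) - b) * (v - u)
      ≤ 2 * log (2 * cosh (v / 2)) - b * v := by
  have h := log_cosh_add_tanh_mul_sub_le (u / 2) (v / 2)
  rw [log_mul two_ne_zero (cosh_pos _).ne', log_mul two_ne_zero (cosh_pos _).ne']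
  linarith

theorem sum_logistic_le_of_dotProduct_eq_zero {ι : Type*} [Fintype ι] (b u v : ι → ℝ)
    (h : (fun i ↦ tanh (u i / 2) - b i) ⬝ᵥ (v - u) = 0) :
    ∑ i, 2 * log (2 * cosh (u i / 2)) - ∑ i, b i * u i
      ≤ ∑ i, 2 * log (2 * cosh (v i / 2)) - ∑ i, b i * v i := by
  simp only [dotProduct, Pi.sub_apply] at h
  rw [← sum_sub_distrib, ← sum_sub_distrib, ← add_zero (∑ i, _), ← h, ← sum_add_distrib]
  exact sum_le_sum fun i _ ↦ logistic_tangent_le (b i) (u i) (v i)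

theorem sum_finProdFinEquiv {M : Type*} [AddCommMonoid M] {m n : ℕ} (F : Fin (m * n) → M) :
    ∑ i, F i = ∑ a : Fin m, ∑ j : Fin n, F (finProdFinEquiv (a, j)) := by
  rw [← finProdFinEquiv.sum_comp, Fintype.sum_prod_type]

/- `finProdFinEquiv (a, j) = j + k * a` indexes row `j` of the `a`-th block of `A_k` and `b_k`. -/
def blockScale (σ ζ : ℝ) : Fin 4 → ℝ := ![2 * σ, -2 * ζ, -2 * σ, 2 * ζ]

def blockSign : Fin 4 → ℝ := ![1, 1, -1, -1]

section Blocks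

variable {k : ℕ}

theorem Amat_finProdFinEquiv (σ ζ : ℝ) (a : Fin 4) (j : Fin k) :
    Amat σ ζ k (finProdFinEquiv (a, j)) = blockScale σ ζ a • Wmat k j := by
  ext l
  have hj := j.isLt
  fin_cases a <;> simp only [Amat, of_apply, finProdFinEquiv_apply_val, mul_comm k] <;>
    split_ifs <;> first | omega | simp [blockScale]

theorem bvec_finProdFinEquiv (a : Fin 4) (j : Fin k) :
    bvec k (finProdFinEquiv (a, j)) = blockSign a := by
  have hj := j.isLt
  fin_cases a <;> simp only [bvec, finProdFinEquiv_apply_val] <;> split_ifs <;>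
    first | omega | simp [blockSign]

theorem Wmat_apply (i j : Fin k) :
    Wmat k i j =
      (if (j : ℕ) = k - 1 - i then 1 else 0) - (if (j : ℕ) + 1 = k - 1 - i then 1 else 0) := by
  have := i.isLt
  simp only [Wmat, of_apply]
  split_ifs <;> first | omega | norm_num

theorem Wmat_mulVec_xstar (c : ℝ) (i : Fin k) : (Wmat k *ᵥ xstar c k) i = c := by
  set m := k - 1 - (i : ℕ)
  have hm : m < k := by omega
  simp only [mulVec, dotProduct, Wmat_apply, xstar, sub_mul, ite_mul, one_mul, zero_mul,
    sum_sub_distrib]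
  rw [Fin.sum_univ_eq_sum_range (fun j ↦ if j = m then c * (j + 1) else 0),
    Fin.sum_univ_eq_sum_range (fun j ↦ if j + 1 = m then c * (j + 1) else 0),
    sum_ite_eq' _ _ (fun j : ℕ ↦ c * ((j : ℝ) + 1)), if_pos (mem_range.2 hm)]
  -- the second sum is `∑ j < k + 1, [j = m] c j` with its vanishing `j = 0` term dropped
  have hshift := sum_range_succ' (fun j ↦ if j = m then c * (j : ℝ) else 0) k
  rw [sum_ite_eq', if_pos (mem_range.2 (by omega))] at hshift
  simp only [Nat.cast_add, Nat.cast_one, Nat.cast_zero, mul_zero, ite_self, add_zero] at hshift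
  rw [← hshift]
  ring

theorem Amat_mulVec_finProdFinEquiv (σ ζ : ℝ) (x : Fin k → ℝ) (a : Fin 4) (j : Fin k) :
    (Amat σ ζ k *ᵥ x) (finProdFinEquiv (a, j)) = blockScale σ ζ a * (Wmat k *ᵥ x) j := by
  simp only [mulVec, Amat_finProdFinEquiv, smul_dotProduct, smul_eq_mul]

theorem sum_tanh_sub_blockSign_mul_blockScale {σ ζ c : ℝ}
    (heq : σ * tanh (σ * c) + ζ * tanh (ζ * c) = σ - ζ) :
    ∑ a, (tanh (blockScale σ ζ a * c / 2) - blockSign a) * blockScale σ ζ a = 0 := by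
  have half : ∀ s : ℝ, 2 * s * c / 2 = s * c := fun s ↦ by ring
  simp only [Fin.sum_univ_four, blockScale, blockSign, Matrix.cons_val, neg_mul, neg_div, half,
    tanh_neg]
  linear_combination 4 * heq

theorem dotProduct_Amat_mulVec_eq_zero {σ ζ c : ℝ}
    (heq : σ * tanh (σ * c) + ζ * tanh (ζ * c) = σ - ζ) (z : Fin k → ℝ) :
    (fun i ↦ tanh ((Amat σ ζ k *ᵥ xstar c k) i / 2) - bvec k i) ⬝ᵥ (Amat σ ζ k *ᵥ z)
      = 0 := by
  simp only [dotProduct, sum_finProdFinEquiv, Amat_mulVec_finProdFinEquiv, Wmat_mulVec_xstar,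
    bvec_finProdFinEquiv, ← mul_assoc, ← mul_sum, ← sum_mul,
    sum_tanh_sub_blockSign_mul_blockScale heq, zero_mul]

end Blocks

theorem fk_xstar (σ ζ c : ℝ) (k : ℕ) :
    fk σ ζ k (xstar c k) = 8 * k * log 2
      + 4 * k * (log (cosh (σ * c)) + log (cosh (ζ * c)) - (σ - ζ) * c) := by
  have half : ∀ s : ℝ, 2 * s * c / 2 = s * c := fun s ↦ by ring
  simp only [fk, sum_finProdFinEquiv, Amat_mulVec_finProdFinEquiv, Wmat_mulVec_xstar,
    bvec_finProdFinEquiv, sum_const, card_univ, Fintype.card_fin, nsmul_eq_mul, Fin.sum_univ_four,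
    blockScale, blockSign, Matrix.cons_val, neg_mul, neg_div, half, cosh_neg,
    log_mul two_ne_zero (cosh_pos _).ne']
  ring

theorem optimal_value_fk_general (σ ζ c : ℝ)
    (heq : σ * Real.tanh (σ * c) + ζ * Real.tanh (ζ * c) = σ - ζ) (k : ℕ) :
    IsLeast (Set.range (fk σ ζ k)) (fk σ ζ k (xstar c k)) ∧
      fk σ ζ k (xstar c k)
        = 8 * k * Real.log 2
          + 4 * k * (Real.log (Real.cosh (σ * c)) + Real.log (Real.cosh (ζ * c))
              - (σ - ζ) * c) := by
  refine ⟨⟨⟨xstar c k, rfl⟩, ?_⟩, fk_xstar σ ζ c k⟩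
  rintro _ ⟨y, rfl⟩
  apply sum_logistic_le_of_dotProduct_eq_zero
  rw [← mulVec_sub]
  exact dotProduct_Amat_mulVec_eq_zero heq (y - xstar c k)

theorem optimal_value_fk (σ ζ c : ℝ) (hζ : 0 < ζ) (hζσ : ζ < σ) (hc : 0 < c)
    (heq : σ * Real.tanh (σ * c) + ζ * Real.tanh (ζ * c) = σ - ζ) (k : ℕ) :
    IsLeast (Set.range (fk σ ζ k)) (fk σ ζ k (xstar c k)) ∧
      fk σ ζ k (xstar c k)
        = 8 * k * Real.log 2
          + 4 * k * (Real.log (Real.cosh (σ * c)) + Real.log (Real.cosh (ζ * c))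
              - (σ - ζ) * c) :=
  optimal_value_fk_general σ ζ c heq k
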